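/- arXiv:2110.10946 — 3 statements merged into one kernel-verified Lean document; each statement's English description precedes it below -/
import Mathlib

section
/- Let f ≥ 1 be an integer and set n = 2^(2f+1). If p ≠ 3 is a prime dividing n⁶ + 1 but not dividing n² + 1 and not dividing n² − 1 (equivalently, p divides the product (q⁴+√2q³+q²+√2q+1)(q⁴−√2q³+q²−√2q+1) where q² = n), then p ≡ 1 (mod 12) or p ≡ 11 (mod 12). -/
theorem stmt_3 (f : ℕ) (hf : 1 ≤ f) (p : ℕ) (hp : p.Prime) (hp3 : p ≠ 3)
    (hdvd : (p : ℤ) ∣ ((2 : ℤ) ^ (2 * f + 1)) ^ 6 + 1)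
    (hndvd : ¬ (p : ℤ) ∣ ((2 : ℤ) ^ (2 * f + 1)) ^ 2 + 1) :
    p % 12 = 1 ∨ p % 12 = 11 := by
  have hp2 : p ≠ 2 := by
    rintro rfl
    have h1 : (2 : ℤ) ∣ ((2 : ℤ) ^ (2 * f + 1)) ^ 6 + 1 := by exact_mod_cast hdvd
    have h2 : (2 : ℤ) ∣ ((2 : ℤ) ^ (2 * f + 1)) ^ 6 :=
      dvd_pow (dvd_pow_self 2 (by omega)) (by norm_num)
    omega
  haveI : Fact p.Prime := ⟨hp⟩
  set u : ZMod p := ((2 : ZMod p) ^ (2 * f + 1)) with hu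
  have h6 : u ^ 6 = -1 := by
    have : (((2 : ℤ) ^ (2 * f + 1)) ^ 6 + 1 : ℤ) = 0 → True := fun _ => trivial
    have hz : ((((2 : ℤ) ^ (2 * f + 1)) ^ 6 + 1 : ℤ) : ZMod p) = 0 :=
      (ZMod.intCast_zmod_eq_zero_iff_dvd _ p).2 hdvd
    push_cast at hz
    linear_combination hz
  have hne : (-1 : ZMod p) ≠ 1 := by
    intro h
    have : ((2 : ℕ) : ZMod p) = 0 := by
      push_cast
      linear_combination -h
    have := (ZMod.natCast_eq_zero_iff 2 p).1 this
    have := Nat.le_of_dvd (by norm_num) this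
    interval_cases p <;> simp_all
  have h12 : u ^ 12 = 1 := by
    have : u ^ 12 = (u ^ 6) ^ 2 := by ring
    rw [this, h6]; ring
  have hdvd12 : orderOf u ∣ 12 := orderOf_dvd_of_pow_eq_one h12
  have hnot6 : ¬ orderOf u ∣ 6 := by
    intro h
    have : u ^ 6 = 1 := orderOf_dvd_iff_pow_eq_one.1 h
    rw [h6] at this; exact hne this
  have hnot4 : ¬ orderOf u ∣ 4 := by
    intro h
    have h4 : u ^ 4 = 1 := orderOf_dvd_iff_pow_eq_one.1 h
    have h2 : u ^ 2 = -1 := by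
      have : u ^ 6 = u ^ 4 * u ^ 2 := by ring
      rw [h6, h4, one_mul] at this
      exact this.symm
    apply hndvd
    rw [← ZMod.intCast_zmod_eq_zero_iff_dvd]
    push_cast
    have : u ^ 2 + 1 = 0 := by rw [h2]; ring
    simpa [hu] using this
  have hord : orderOf u = 12 := by
    have hle : orderOf u ≤ 12 := Nat.le_of_dvd (by norm_num) hdvd12
    interval_cases (orderOf u) <;>
      first | rfl | (exfalso; revert hdvd12 hnot6 hnot4; decide)
  have hu0 : u ≠ 0 := by
    intro h
    rw [h] at h12
    simp at h12
  have hdp : orderOf u ∣ p - 1 :=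
    orderOf_dvd_of_pow_eq_one (ZMod.pow_card_sub_one_eq_one hu0)
  rw [hord] at hdp
  left
  have hp1 : 2 ≤ p := hp.two_le
  omega
end

section
/- Let f ≥ 1 be an integer and n = 2^(2f+1). If p is a prime with p ≠ 3, p ∣ n⁶ + 1 and p ∤ n² + 1, then p ≡ 1 (mod 12) or p ≡ 11 (mod 12). -/
/-! `n = 2 ^ (2f+1)` is a unit modulo `p` with `n ^ 6 = -1` and `n ^ 2 ≠ -1`, so its order is exactly
`12`; since that order divides `p - 1`, in fact `p ≡ 1 (mod 12)`. -/

theorem ZMod.intCast_eq_neg_one_iff_dvd (x : ℤ) (p : ℕ) : (x : ZMod p) = -1 ↔ (p : ℤ) ∣ x + 1 := by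
  rw [← ZMod.intCast_zmod_eq_zero_iff_dvd, Int.cast_add, Int.cast_one, eq_neg_iff_add_eq_zero]

theorem orderOf_eq_twelve_of_pow_six_eq_neg_one {R : Type*} [Ring R] {a : R} (hR : (-1 : R) ≠ 1)
    (h6 : a ^ 6 = -1) (h2 : a ^ 2 ≠ -1) : orderOf a = 12 := by
  refine orderOf_eq_of_pow_and_pow_div_prime (by norm_num) (by rw [pow_mul a 6 2, h6]; simp) ?_
  intro q hq hq12
  have hq_le : q ≤ 12 := Nat.le_of_dvd (by norm_num) hq12
  obtain rfl | rfl : q = 2 ∨ q = 3 := by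
    interval_cases q <;> first | omega | norm_num at hq
  · show a ^ 6 ≠ 1
    rwa [h6]
  · show a ^ 4 ≠ 1
    intro h4
    exact h2 (by rw [← h6, pow_add a 4 2, h4, one_mul])

theorem FiniteField.twelve_dvd_card_sub_one_of_pow_six_eq_neg_one {K : Type*} [Field K] [Fintype K]
    (hK : ringChar K ≠ 2) {a : K} (h6 : a ^ 6 = -1) (h2 : a ^ 2 ≠ -1) :
    12 ∣ Fintype.card K - 1 := by
  have ha : a ≠ 0 := by
    rintro rfl
    simp at h6
  rw [← orderOf_eq_twelve_of_pow_six_eq_neg_one (Ring.neg_one_ne_one_of_char_ne_two hK) h6 h2]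
  exact orderOf_dvd_of_pow_eq_one (FiniteField.pow_card_sub_one_eq_one a ha)

theorem stmt_4_general (f : ℕ) (p : ℕ) (hp : p.Prime)
    (hdvd : (p : ℤ) ∣ ((2 : ℤ) ^ (2 * f + 1)) ^ 6 + 1)
    (hndvd : ¬ (p : ℤ) ∣ ((2 : ℤ) ^ (2 * f + 1)) ^ 2 + 1) :
    p % 12 = 1 ∨ p % 12 = 11 := by
  have : Fact p.Prime := ⟨hp⟩
  have hp2 : p ≠ 2 := by
    rintro rfl
    rw [show ((2 : ℤ) ^ (2 * f + 1)) ^ 6 + 1 = 2 * 2 ^ (12 * f + 5) + 1 by ring] at hdvd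
    omega
  have h6 : ((2 : ZMod p) ^ (2 * f + 1)) ^ 6 = -1 := by
    exact_mod_cast (ZMod.intCast_eq_neg_one_iff_dvd _ p).mpr hdvd
  have h2 : ((2 : ZMod p) ^ (2 * f + 1)) ^ 2 ≠ -1 := fun h =>
    hndvd ((ZMod.intCast_eq_neg_one_iff_dvd _ p).mp (by exact_mod_cast h))
  have h12 : 12 ∣ Fintype.card (ZMod p) - 1 :=
    FiniteField.twelve_dvd_card_sub_one_of_pow_six_eq_neg_one (by rwa [ZMod.ringChar_zmod_n]) h6 h2
  rw [ZMod.card] at h12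
  have := hp.two_le
  omega

theorem stmt_4 (f : ℕ) (hf : 1 ≤ f) (p : ℕ) (hp : p.Prime) (hp3 : p ≠ 3)
    (hdvd : (p : ℤ) ∣ ((2 : ℤ) ^ (2 * f + 1)) ^ 6 + 1)
    (hndvd : ¬ (p : ℤ) ∣ ((2 : ℤ) ^ (2 * f + 1)) ^ 2 + 1) :
    p % 12 = 1 ∨ p % 12 = 11 :=
  stmt_4_general f p hp hdvd hndvd
end

section
/- Let p be a prime with p ≡ 2 (mod 3) and m an odd positive integer. If 2^(3m) ≡ −1 (mod p), then 2^(2m) ≡ 1 (mod p). -/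
/-! Squaring the hypothesis gives `(2 ^ (2m)) ^ 3 = 1` in `ZMod p`. Since `p ≡ 2 (mod 3)`, the
exponent `3` is coprime to `p - 1`, hence to the order of `2`, so the cube can be dropped. -/

theorem pow_eq_one_of_pow_mul_eq_one_of_coprime {G : Type*} [Monoid G] {x : G} {n k : ℕ}
    (hn : n.Coprime (orderOf x)) (h : x ^ (n * k) = 1) : x ^ k = 1 :=
  orderOf_dvd_iff_pow_eq_one.mp (hn.symm.dvd_of_dvd_mul_left (orderOf_dvd_of_pow_eq_one h))

theorem ZMod.pow_eq_one_of_pow_mul_eq_one {p : ℕ} [Fact p.Prime] {n k : ℕ} (hn0 : n ≠ 0)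
    (hn : n.Coprime (p - 1)) {a : ZMod p} (h : a ^ (n * k) = 1) : a ^ k = 1 := by
  rcases eq_or_ne a 0 with rfl | ha
  · obtain rfl : k = 0 := by
      by_contra hk
      rw [zero_pow (mul_ne_zero hn0 hk)] at h
      exact zero_ne_one h
    exact pow_zero 0
  · exact pow_eq_one_of_pow_mul_eq_one_of_coprime
      (Nat.Coprime.coprime_dvd_right (ZMod.orderOf_dvd_card_sub_one ha) hn) h

theorem stmt_16_general (p : ℕ) (hp : p.Prime) (h3 : p % 3 = 2) (m : ℕ)
    (h : (2 : ℤ) ^ (3 * m) ≡ -1 [ZMOD p]) :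
    (2 : ℤ) ^ (2 * m) ≡ 1 [ZMOD p] := by
  have : Fact p.Prime := ⟨hp⟩
  have h_cube : (2 : ZMod p) ^ (3 * m) = -1 := by
    simpa using (ZMod.intCast_eq_intCast_iff _ _ p).mpr h
  have h_sixth : (2 : ZMod p) ^ (3 * (2 * m)) = 1 := by
    rw [mul_left_comm, mul_comm 2, pow_mul, h_cube, neg_one_sq]
  have h_coprime : Nat.Coprime 3 (p - 1) :=
    (Nat.Prime.coprime_iff_not_dvd Nat.prime_three).mpr (by omega)
  rw [← ZMod.intCast_eq_intCast_iff]
  exact_mod_cast ZMod.pow_eq_one_of_pow_mul_eq_one three_ne_zero h_coprime h_sixth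

theorem stmt_16 (p : ℕ) (hp : p.Prime) (h3 : p % 3 = 2) (m : ℕ) (hm : Odd m)
    (hmpos : 0 < m) (h : (2 : ℤ) ^ (3 * m) ≡ -1 [ZMOD p]) :
    (2 : ℤ) ^ (2 * m) ≡ 1 [ZMOD p] :=
  stmt_16_general p hp h3 m h
end
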